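/- arXiv:2004.07918 — 3 statements merged into one kernel-verified Lean document; each statement's English description precedes it below -/
import Mathlib

section
/- If a vertex v belongs to a k-power dominating set D of a hypergraph H and the white degree of v with respect to N[D\{v}] is at most k, then for any neighbor u of v, the set (D\{v}) ∪ {u} is also a k-power dominating set of H. -/
/-- A hypergraph on vertex type `V`, given by its finite set of (finite) edges. -/
structure Hypergraph' (V : Type*) where
  edges : Finset (Finset V)

namespace Hypergraph'

variable {V : Type*}

/-- Two vertices are adjacent iff they are distinct and share an edge. -/
def Adj (H : Hypergraph' V) (u v : V) : Prop :=
  u ≠ v ∧ ∃ e ∈ H.edges, u ∈ e ∧ v ∈ e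

/-- The underlying adjacency (simple) graph of a hypergraph. -/
def graph (H : Hypergraph' V) : SimpleGraph V where
  Adj := H.Adj
  symm := by
    constructor
    rintro u v ⟨hne, e, he, hu, hv⟩
    exact ⟨hne.symm, e, he, hv, hu⟩
  loopless := by
    constructor
    rintro u ⟨hne, -⟩
    exact hne rfl

/-- Closed neighborhood of a set of vertices. -/
def closedNbhd (H : Hypergraph' V) (S : Set V) : Set V :=
  S ∪ {u | ∃ v ∈ S, H.Adj v u}

/-- `F` is a set of edges through `v` covering all neighbors of `v` outside `S`. -/
def Covers (H : Hypergraph' V) (v : V) (S : Set V) (F : Finset (Finset V)) : Prop :=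
  F ⊆ H.edges ∧ (∀ e ∈ F, v ∈ e) ∧ ∀ u, H.Adj v u → u ∉ S → ∃ e ∈ F, u ∈ e

/-- The white degree of `v` with respect to the blue set `S`: the minimum number of
edges containing `v` that cover all neighbors of `v` outside `S`. -/
noncomputable def wdeg (H : Hypergraph' V) (v : V) (S : Set V) : ℕ :=
  sInf {t | ∃ F, H.Covers v S F ∧ F.card ≤ t}

/-- One step of the `k`-forcing propagation: every blue vertex whose white
neighbors can be covered by at most `k` incident edges forces its neighbors blue. -/
def step (H : Hypergraph' V) (k : ℕ) (S : Set V) : Set V :=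
  S ∪ {u | ∃ v ∈ S, H.Adj v u ∧ H.wdeg v S ≤ k}

/-- `D` is a `k`-power dominating set if iterating the propagation from `N[D]`
colors every vertex blue. -/
def IsPDS (H : Hypergraph' V) (k : ℕ) (D : Set V) : Prop :=
  ∃ t : ℕ, (H.step k)^[t] (H.closedNbhd D) = Set.univ

/-- The `k`-power domination number. -/
noncomputable def pdn (H : Hypergraph' V) (k : ℕ) : ℕ :=
  sInf {t | ∃ D : Finset V, H.IsPDS k ↑D ∧ D.card ≤ t}

/-- A dominating set. -/
def Dominating (H : Hypergraph' V) (S : Set V) : Prop :=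
  H.closedNbhd S = Set.univ

/-- The domination number. -/
noncomputable def gamma (H : Hypergraph' V) : ℕ :=
  sInf {t | ∃ D : Finset V, H.Dominating ↑D ∧ D.card ≤ t}

/-- An `r`-uniform hypergraph. -/
def Uniform (H : Hypergraph' V) (r : ℕ) : Prop :=
  ∀ e ∈ H.edges, e.card = r

/-- Connectivity of the underlying adjacency graph. -/
def Connected (H : Hypergraph' V) : Prop := H.graph.Connected

/-- No isolated vertices: every vertex lies in some edge. -/
def NoIsolated (H : Hypergraph' V) : Prop :=
  ∀ v : V, ∃ e ∈ H.edges, v ∈ e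

/-- External private neighbors of `v` with respect to `D`. -/
def epn (H : Hypergraph' V) (v : V) (D : Set V) : Set V :=
  {u | u ∉ D ∧ H.Adj v u ∧ ∀ w ∈ D, w ≠ v → ¬ H.Adj w u}

/-- Number of connected components of the subhypergraph induced on `D`
(with respect to adjacency within `D`). -/
noncomputable def numComponents (H : Hypergraph' V) (D : Set V) : ℕ :=
  Nat.card (SimpleGraph.ConnectedComponent (SimpleGraph.induce D H.graph))

end Hypergraph'


/- Swapping `v` for a neighbour `u` loses nothing after one propagation step: `u` keeps `v`
blue, the rest of `N[D]` is already in `N[(D \ {v}) ∪ {u}]`, and `v`, now blue with white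
degree at most `k` (white degree only drops as the blue set grows), forces all of `N[v]`.
Since propagation is monotone, the old forcing sequence then runs one step later. -/

namespace Hypergraph'

variable {V : Type*} (H : Hypergraph' V) (k : ℕ)

lemma closedNbhd_mono : Monotone H.closedNbhd := by
  rintro S S' h x (hx | ⟨w, hw, hadj⟩)
  · exact Or.inl (h hx)
  · exact Or.inr ⟨w, h hw, hadj⟩

variable {H} in
lemma Covers.mono {v : V} {S S' : Set V} {F : Finset (Finset V)} (hF : H.Covers v S F)
    (h : S ⊆ S') : H.Covers v S' F :=
  ⟨hF.1, hF.2.1, fun u hadj hu => hF.2.2 u hadj (fun hm => hu (h hm))⟩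

open Classical in
lemma covers_incidentEdges (v : V) (S : Set V) :
    H.Covers v S (H.edges.filter (v ∈ ·)) := by
  refine ⟨Finset.filter_subset _ _, fun e he => (Finset.mem_filter.mp he).2, ?_⟩
  rintro u ⟨-, e, he, hv, hu⟩ -
  exact ⟨e, Finset.mem_filter.mpr ⟨he, hv⟩, hu⟩

lemma wdeg_antitone (v : V) : Antitone (H.wdeg v) := by
  classical
  intro S S' h
  apply csInf_le_csInf (OrderBot.bddBelow _)
  · exact ⟨_, _, H.covers_incidentEdges v S, le_rfl⟩
  · rintro t ⟨F, hF, hc⟩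
    exact ⟨F, hF.mono h, hc⟩

lemma step_mono : Monotone (H.step k) := by
  rintro S S' h x (hx | ⟨w, hw, hadj, hwd⟩)
  · exact Or.inl (h hx)
  · exact Or.inr ⟨w, h hw, hadj, (H.wdeg_antitone w h).trans hwd⟩

variable {H k}

lemma IsPDS.of_closedNbhd_subset_step {D D' : Set V} (hD : H.IsPDS k D)
    (h : H.closedNbhd D ⊆ H.step k (H.closedNbhd D')) : H.IsPDS k D' := by
  obtain ⟨t, ht⟩ := hD
  refine ⟨t + 1, Set.eq_univ_of_univ_subset ?_⟩
  rw [Function.iterate_succ_apply, ← ht]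
  exact (H.step_mono k).iterate t h

lemma closedNbhd_subset_step_of_mem {D S : Set V} {v : V} (hvS : v ∈ S)
    (hS : H.closedNbhd (D \ {v}) ⊆ S) (hw : H.wdeg v S ≤ k) :
    H.closedNbhd D ⊆ H.step k S := by
  rintro x (hxD | ⟨w, hwD, hadj⟩)
  · rcases eq_or_ne x v with rfl | hne
    · exact Or.inl hvS
    · exact Or.inl (hS (Or.inl ⟨hxD, hne⟩))
  · rcases eq_or_ne w v with rfl | hne
    · exact Or.inr ⟨w, hvS, hadj, hw⟩
    · exact Or.inl (hS (Or.inr ⟨w, ⟨hwD, hne⟩, hadj⟩))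

end Hypergraph'

open Hypergraph' in
theorem swap_vertex_kPDS_general {V : Type*} (H : Hypergraph' V) (k : ℕ) (D : Set V) (v u : V)
    (hD : H.IsPDS k D)
    (hw : H.wdeg v (H.closedNbhd (D \ {v})) ≤ k)
    (hu : H.Adj v u) :
    H.IsPDS k ((D \ {v}) ∪ {u}) := by
  set S := H.closedNbhd ((D \ {v}) ∪ {u})
  have hsub : H.closedNbhd (D \ {v}) ⊆ S := H.closedNbhd_mono Set.subset_union_left
  have hvS : v ∈ S := Or.inr ⟨u, Or.inr rfl, H.graph.adj_symm hu⟩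
  exact hD.of_closedNbhd_subset_step <|
    closedNbhd_subset_step_of_mem hvS hsub ((H.wdeg_antitone v hsub).trans hw)

open Hypergraph' in
/-- If `v` belongs to a `k`-power dominating set `D` and the white degree of
`v` with respect to `N[D \ {v}]` is at most `k`, then for any neighbor `u` of `v`,
`(D \ {v}) ∪ {u}` is also a `k`-power dominating set. -/
theorem swap_vertex_kPDS {V : Type*} (H : Hypergraph' V) (k : ℕ) (D : Set V) (v u : V)
    (hD : H.IsPDS k D) (hv : v ∈ D)
    (hw : H.wdeg v (H.closedNbhd (D \ {v})) ≤ k)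
    (hu : H.Adj v u) :
    H.IsPDS k ((D \ {v}) ∪ {u}) :=
  swap_vertex_kPDS_general H k D v u hD hw hu
end

section
/- In the hypergraph H with vertex sets X, Y, Z of size k+1 (weak vertices), A_1, A_2, A_3 of size k+2, B_1, B_2 of size ℓ ≥ 0, and edges A_1 ∪ B_1 ∪ {x_i} ∪ A_2, A_2 ∪ B_1 ∪ {z_i} ∪ A_3, and A_1 ∪ B_2 ∪ {y_i} ∪ A_3 for 1 ≤ i ≤ k+1, no singleton set {v} is a k-power dominating set; hence γ_p^k(H) ≥ 2. -/
/-!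
Call `W` a fan with core `C` when the only edge through a vertex `w ∈ W` is `insert w C`; in `H`
each of `X, Y, Z` is a fan of size `k + 1`, whose core is the union of the three sets it shares
its edges with. While `W` is entirely white, every blue neighbour of a vertex of `W` lies in `C`
and sees all of `W` through `|W| > k` distinct edges, so it cannot force: the complement of `W` is
closed under propagation. If `D` misses `W ∪ C`, then `N[D]` misses `W`, so `D` is not `k`-power
dominating. Every vertex misses one of the three fans together with its core.
-/

/-- A hypergraph on vertex type `V`, given by its finite set of (finite) edges. -/
structure FinsetHypergraph (V : Type*) where
  edges : Finset (Finset V)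

namespace FinsetHypergraph

variable {V : Type*}

/-- Two vertices are adjacent iff they are distinct and share an edge. -/
def Adj (H : FinsetHypergraph V) (u v : V) : Prop :=
  u ≠ v ∧ ∃ e ∈ H.edges, u ∈ e ∧ v ∈ e

/-- The underlying adjacency (simple) graph of a hypergraph. -/
def graph (H : FinsetHypergraph V) : SimpleGraph V where
  Adj := H.Adj
  symm := ⟨by
    rintro u v ⟨hne, e, he, hu, hv⟩
    exact ⟨hne.symm, e, he, hv, hu⟩⟩
  loopless := ⟨by
    rintro u ⟨hne, -⟩
    exact hne rfl⟩

/-- Closed neighborhood of a set of vertices. -/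
def closedNbhd (H : FinsetHypergraph V) (S : Set V) : Set V :=
  S ∪ {u | ∃ v ∈ S, H.Adj v u}

/-- `F` is a set of edges through `v` covering all neighbors of `v` outside `S`. -/
def Covers (H : FinsetHypergraph V) (v : V) (S : Set V) (F : Finset (Finset V)) : Prop :=
  F ⊆ H.edges ∧ (∀ e ∈ F, v ∈ e) ∧ ∀ u, H.Adj v u → u ∉ S → ∃ e ∈ F, u ∈ e

/-- The white degree of `v` with respect to the blue set `S`: the minimum number of
edges containing `v` that cover all neighbors of `v` outside `S`. -/
noncomputable def wdeg (H : FinsetHypergraph V) (v : V) (S : Set V) : ℕ :=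
  sInf {t | ∃ F, H.Covers v S F ∧ F.card ≤ t}

/-- One step of the `k`-forcing propagation: every blue vertex whose white
neighbors can be covered by at most `k` incident edges forces its neighbors blue. -/
def step (H : FinsetHypergraph V) (k : ℕ) (S : Set V) : Set V :=
  S ∪ {u | ∃ v ∈ S, H.Adj v u ∧ H.wdeg v S ≤ k}

/-- `D` is a `k`-power dominating set if iterating the propagation from `N[D]`
colors every vertex blue. -/
def IsPDS (H : FinsetHypergraph V) (k : ℕ) (D : Set V) : Prop :=
  ∃ t : ℕ, (H.step k)^[t] (H.closedNbhd D) = Set.univ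

/-- The `k`-power domination number. -/
noncomputable def pdn (H : FinsetHypergraph V) (k : ℕ) : ℕ :=
  sInf {t | ∃ D : Finset V, H.IsPDS k ↑D ∧ D.card ≤ t}

/-- A dominating set. -/
def Dominating (H : FinsetHypergraph V) (S : Set V) : Prop :=
  H.closedNbhd S = Set.univ

/-- The domination number. -/
noncomputable def gamma (H : FinsetHypergraph V) : ℕ :=
  sInf {t | ∃ D : Finset V, H.Dominating ↑D ∧ D.card ≤ t}

/-- An `r`-uniform hypergraph. -/
def Uniform (H : FinsetHypergraph V) (r : ℕ) : Prop :=
  ∀ e ∈ H.edges, e.card = r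

/-- Connectivity of the underlying adjacency graph. -/
def Connected (H : FinsetHypergraph V) : Prop := H.graph.Connected

/-- No isolated vertices: every vertex lies in some edge. -/
def NoIsolated (H : FinsetHypergraph V) : Prop :=
  ∀ v : V, ∃ e ∈ H.edges, v ∈ e

/-- External private neighbors of `v` with respect to `D`. -/
def epn (H : FinsetHypergraph V) (v : V) (D : Set V) : Set V :=
  {u | u ∉ D ∧ H.Adj v u ∧ ∀ w ∈ D, w ≠ v → ¬ H.Adj w u}

/-- Number of connected components of the subhypergraph induced on `D`
(with respect to adjacency within `D`). -/
noncomputable def numComponents (H : FinsetHypergraph V) (D : Set V) : ℕ :=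
  Nat.card (SimpleGraph.ConnectedComponent (SimpleGraph.induce D H.graph))

variable {H : FinsetHypergraph V} {k : ℕ}

theorem exists_covers (H : FinsetHypergraph V) (v : V) (S : Set V) :
    ∃ F, H.Covers v S F := by
  classical
  exact ⟨H.edges.filter (v ∈ ·), Finset.filter_subset _ _, fun e he => (Finset.mem_filter.mp he).2,
    fun u ⟨_, e, he, hv, hu⟩ _ => ⟨e, Finset.mem_filter.mpr ⟨he, hv⟩, hu⟩⟩

theorem exists_covers_card_le_wdeg (H : FinsetHypergraph V) (v : V) (S : Set V) :
    ∃ F, H.Covers v S F ∧ F.card ≤ H.wdeg v S :=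
  let ⟨F, hF⟩ := H.exists_covers v S
  Nat.sInf_mem (s := {t | ∃ F, H.Covers v S F ∧ F.card ≤ t}) ⟨F.card, F, hF, le_rfl⟩

theorem isPDS_univ (H : FinsetHypergraph V) (k : ℕ) : H.IsPDS k Set.univ :=
  ⟨0, Set.union_eq_left.mpr (Set.subset_univ _)⟩

theorem le_pdn [Fintype V] {m : ℕ}
    (h : ∀ D : Finset V, D.card < m → ¬ H.IsPDS k D) : m ≤ H.pdn k := by
  refine le_csInf ⟨_, Finset.univ, by simpa using H.isPDS_univ k, le_rfl⟩ ?_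
  rintro t ⟨D, hD, hDt⟩
  by_contra! hlt
  exact h D (by omega) hD

variable [DecidableEq V] {C W : Finset V} {v w : V}

def IsFan (H : FinsetHypergraph V) (C W : Finset V) : Prop :=
  Disjoint W C ∧ ∀ w ∈ W, ∀ e, e ∈ H.edges ∧ w ∈ e ↔ e = insert w C

namespace IsFan

theorem insert_mem_edges (hf : H.IsFan C W) (hw : w ∈ W) : insert w C ∈ H.edges :=
  ((hf.2 w hw _).2 rfl).1

theorem eq_insert (hf : H.IsFan C W) (hw : w ∈ W) {e : Finset V} (he : e ∈ H.edges)
    (hwe : w ∈ e) : e = insert w C :=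
  (hf.2 w hw e).1 ⟨he, hwe⟩

theorem mem_core_of_adj (hf : H.IsFan C W) (hw : w ∈ W) (h : H.Adj v w) : v ∈ C := by
  obtain ⟨hne, e, he, hv, hwe⟩ := h
  rw [hf.eq_insert hw he hwe] at hv
  exact (Finset.mem_insert.mp hv).resolve_left hne

theorem adj (hf : H.IsFan C W) (hw : w ∈ W) (hv : v ∈ C) : H.Adj v w :=
  ⟨fun h => Finset.disjoint_left.mp hf.1 (h ▸ hw) hv, insert w C, hf.insert_mem_edges hw,
    Finset.mem_insert_of_mem hv, Finset.mem_insert_self w C⟩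

theorem card_le_wdeg (hf : H.IsFan C W) (hv : v ∈ C) {S : Set V} (hS : S ⊆ (↑W)ᶜ) :
    W.card ≤ H.wdeg v S := by
  obtain ⟨F, ⟨hFE, -, hFcov⟩, hFcard⟩ := H.exists_covers_card_le_wdeg v S
  refine le_trans (Finset.card_le_card_of_injOn (insert · C) (fun w hw => ?_) ?_) hFcard
  · obtain ⟨e, heF, hwe⟩ := hFcov w (hf.adj hw hv) (fun hwS => hS hwS hw)
    rwa [hf.eq_insert hw (hFE heF) hwe] at heF
  · intro w hw w' _ h
    exact (Finset.insert_inj (Finset.disjoint_left.mp hf.1 hw)).mp h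

theorem step_subset (hf : H.IsFan C W) (hk : k < W.card) {S : Set V} (hS : S ⊆ (↑W)ᶜ) :
    H.step k S ⊆ (↑W)ᶜ := by
  rintro u (hu | ⟨v, -, hvu, hdeg⟩)
  · exact hS hu
  · intro huW
    have := hf.card_le_wdeg (hf.mem_core_of_adj huW hvu) hS
    omega

theorem closedNbhd_subset (hf : H.IsFan C W) {D : Set V} (hD : Disjoint D ↑(W ∪ C)) :
    H.closedNbhd D ⊆ (↑W)ᶜ := by
  rintro u (hu | ⟨v, hv, hvu⟩) huW
  · exact Set.disjoint_left.mp hD hu (by simp [huW])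
  · exact Set.disjoint_left.mp hD hv (by simp [hf.mem_core_of_adj huW hvu])

theorem not_isPDS (hf : H.IsFan C W) (hk : k < W.card) {D : Set V} (hD : Disjoint D ↑(W ∪ C)) :
    ¬ H.IsPDS k D := by
  rintro ⟨t, ht⟩
  obtain ⟨w, hw⟩ := Finset.card_pos.mp (Nat.zero_lt_of_lt hk)
  have hblue : (H.step k)^[t] (H.closedNbhd D) ⊆ (↑W)ᶜ :=
    Set.MapsTo.iterate (s := {S : Set V | S ⊆ (↑W)ᶜ}) (fun _ hS => hf.step_subset hk hS) t
      (hf.closedNbhd_subset hD)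
  exact hblue (ht ▸ Set.mem_univ w) hw

theorem not_isPDS_singleton (hf : H.IsFan C W) (hk : k < W.card) (hv : v ∉ W ∪ C) :
    ¬ H.IsPDS k {v} :=
  hf.not_isPDS hk (Set.disjoint_singleton_left.mpr (by exact_mod_cast hv))

end IsFan

theorem counterexample_isFan {A1 A2 A3 B1 B2 X Y Z : Finset V}
    (hdisj : List.Pairwise Disjoint [A1, A2, A3, B1, B2, X, Y, Z])
    (hedges : H.edges =
      X.image (fun x => A1 ∪ B1 ∪ {x} ∪ A2) ∪
      Z.image (fun z => A2 ∪ B1 ∪ {z} ∪ A3) ∪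
      Y.image (fun y => A1 ∪ B2 ∪ {y} ∪ A3)) :
    H.IsFan (A1 ∪ B1 ∪ A2) X ∧ H.IsFan (A1 ∪ B2 ∪ A3) Y ∧ H.IsFan (A2 ∪ B1 ∪ A3) Z := by
  simp only [List.pairwise_cons, List.mem_cons, List.not_mem_nil, forall_eq_or_imp,
    false_implies, implies_true, and_true, Finset.disjoint_left] at hdisj
  simp only [IsFan, hedges, Finset.disjoint_left, Finset.mem_union, Finset.mem_image]
  refine ⟨⟨?_, ?_⟩, ⟨?_, ?_⟩, ⟨?_, ?_⟩⟩ <;> grind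

end FinsetHypergraph

open FinsetHypergraph in
theorem counterexample_no_singleton_general {V : Type*} [Fintype V] [DecidableEq V]
    (H : FinsetHypergraph V) (k : ℕ)
    (A1 A2 A3 B1 B2 X Y Z : Finset V)
    (hX : X.card = k + 1) (hY : Y.card = k + 1) (hZ : Z.card = k + 1)
    (hdisj : List.Pairwise Disjoint [A1, A2, A3, B1, B2, X, Y, Z])
    (hedges : H.edges =
      X.image (fun x => A1 ∪ B1 ∪ {x} ∪ A2) ∪
      Z.image (fun z => A2 ∪ B1 ∪ {z} ∪ A3) ∪
      Y.image (fun y => A1 ∪ B2 ∪ {y} ∪ A3)) :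
    (∀ v : V, ¬ H.IsPDS k {v}) ∧ 2 ≤ H.pdn k := by
  obtain ⟨hfX, hfY, hfZ⟩ := counterexample_isFan hdisj hedges
  have hsingleton : ∀ v : V, ¬ H.IsPDS k {v} := by
    simp only [List.pairwise_cons, List.mem_cons, List.not_mem_nil, forall_eq_or_imp,
      false_implies, implies_true, and_true, Finset.disjoint_left] at hdisj
    intro v
    by_cases hA1 : v ∈ A1
    · exact hfZ.not_isPDS_singleton (by omega) (by grind)
    by_cases hvY : v ∈ Y ∪ (A1 ∪ B2 ∪ A3)
    · exact hfX.not_isPDS_singleton (by omega) (by grind)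
    · exact hfY.not_isPDS_singleton (by omega) hvY
  refine ⟨hsingleton, le_pdn fun D hD => ?_⟩
  obtain hD | hD : D.card = 0 ∨ D.card = 1 := by omega
  · rw [Finset.card_eq_zero.mp hD, Finset.coe_empty]
    exact hfX.not_isPDS (by omega) (Set.empty_disjoint _)
  · obtain ⟨v, rfl⟩ := Finset.card_eq_one.mp hD
    simpa using hsingleton v

open FinsetHypergraph in
/-- In the counterexample hypergraph (weak vertex sets `X, Y, Z` of size
`k+1`, strong sets `A₁, A₂, A₃` of size `k+2`, sets `B₁, B₂` of size `ℓ`, with the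
three families of edges), no singleton is a `k`-power dominating set; hence
`γ_p^k(H) ≥ 2`. -/
theorem counterexample_no_singleton {V : Type*} [Fintype V] [DecidableEq V]
    (H : FinsetHypergraph V) (k ℓ : ℕ) (hk : 1 ≤ k)
    (A1 A2 A3 B1 B2 X Y Z : Finset V)
    (hA1 : A1.card = k + 2) (hA2 : A2.card = k + 2) (hA3 : A3.card = k + 2)
    (hB1 : B1.card = ℓ) (hB2 : B2.card = ℓ)
    (hX : X.card = k + 1) (hY : Y.card = k + 1) (hZ : Z.card = k + 1)
    (hdisj : List.Pairwise Disjoint [A1, A2, A3, B1, B2, X, Y, Z])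
    (huniv : A1 ∪ A2 ∪ A3 ∪ B1 ∪ B2 ∪ X ∪ Y ∪ Z = Finset.univ)
    (hedges : H.edges =
      X.image (fun x => A1 ∪ B1 ∪ {x} ∪ A2) ∪
      Z.image (fun z => A2 ∪ B1 ∪ {z} ∪ A3) ∪
      Y.image (fun y => A1 ∪ B2 ∪ {y} ∪ A3)) :
    (∀ v : V, ¬ H.IsPDS k {v}) ∧ 2 ≤ H.pdn k :=
  counterexample_no_singleton_general H k A1 A2 A3 B1 B2 X Y Z hX hY hZ hdisj hedges
end

section
/- Let H be a (d,k,r,x)-squid with d(r+k) = |V(H)|. Then γ_p^k(H) = d. -/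
/-- A hypergraph on vertex type `V`, given by its finite set of (finite) edges. -/
structure FinHypergraph (V : Type*) where
  edges : Finset (Finset V)

namespace FinHypergraph

variable {V : Type*}

/-- Two vertices are adjacent iff they are distinct and share an edge. -/
def Adj (H : FinHypergraph V) (u v : V) : Prop :=
  u ≠ v ∧ ∃ e ∈ H.edges, u ∈ e ∧ v ∈ e

/-- The underlying adjacency (simple) graph of a hypergraph. -/
def graph (H : FinHypergraph V) : SimpleGraph V where
  Adj := H.Adj
  symm := by
    constructor
    rintro u v ⟨hne, e, he, hu, hv⟩
    exact ⟨hne.symm, e, he, hv, hu⟩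
  loopless := by
    constructor
    rintro u ⟨hne, -⟩
    exact hne rfl

/-- Closed neighborhood of a set of vertices. -/
def closedNbhd (H : FinHypergraph V) (S : Set V) : Set V :=
  S ∪ {u | ∃ v ∈ S, H.Adj v u}

/-- `F` is a set of edges through `v` covering all neighbors of `v` outside `S`. -/
def Covers (H : FinHypergraph V) (v : V) (S : Set V) (F : Finset (Finset V)) : Prop :=
  F ⊆ H.edges ∧ (∀ e ∈ F, v ∈ e) ∧ ∀ u, H.Adj v u → u ∉ S → ∃ e ∈ F, u ∈ e

/-- The white degree of `v` with respect to the blue set `S`: the minimum number of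
edges containing `v` that cover all neighbors of `v` outside `S`. -/
noncomputable def wdeg (H : FinHypergraph V) (v : V) (S : Set V) : ℕ :=
  sInf {t | ∃ F, H.Covers v S F ∧ F.card ≤ t}

/-- One step of the `k`-forcing propagation: every blue vertex whose white
neighbors can be covered by at most `k` incident edges forces its neighbors blue. -/
def step (H : FinHypergraph V) (k : ℕ) (S : Set V) : Set V :=
  S ∪ {u | ∃ v ∈ S, H.Adj v u ∧ H.wdeg v S ≤ k}

/-- `D` is a `k`-power dominating set if iterating the propagation from `N[D]`
colors every vertex blue. -/
def IsPDS (H : FinHypergraph V) (k : ℕ) (D : Set V) : Prop :=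
  ∃ t : ℕ, (H.step k)^[t] (H.closedNbhd D) = Set.univ

/-- The `k`-power domination number. -/
noncomputable def pdn (H : FinHypergraph V) (k : ℕ) : ℕ :=
  sInf {t | ∃ D : Finset V, H.IsPDS k ↑D ∧ D.card ≤ t}

/-- A dominating set. -/
def Dominating (H : FinHypergraph V) (S : Set V) : Prop :=
  H.closedNbhd S = Set.univ

/-- The domination number. -/
noncomputable def gamma (H : FinHypergraph V) : ℕ :=
  sInf {t | ∃ D : Finset V, H.Dominating ↑D ∧ D.card ≤ t}

/-- An `r`-uniform hypergraph. -/
def Uniform (H : FinHypergraph V) (r : ℕ) : Prop :=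
  ∀ e ∈ H.edges, e.card = r

/-- Connectivity of the underlying adjacency graph. -/
def Connected (H : FinHypergraph V) : Prop := H.graph.Connected

/-- No isolated vertices: every vertex lies in some edge. -/
def NoIsolated (H : FinHypergraph V) : Prop :=
  ∀ v : V, ∃ e ∈ H.edges, v ∈ e

/-- External private neighbors of `v` with respect to `D`. -/
def epn (H : FinHypergraph V) (v : V) (D : Set V) : Set V :=
  {u | u ∉ D ∧ H.Adj v u ∧ ∀ w ∈ D, w ≠ v → ¬ H.Adj w u}

/-- Number of connected components of the subhypergraph induced on `D`
(with respect to adjacency within `D`). -/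
noncomputable def numComponents (H : FinHypergraph V) (D : Set V) : ℕ :=
  Nat.card (SimpleGraph.ConnectedComponent (SimpleGraph.induce D H.graph))

end FinHypergraph

/-- A `(d,k,r,x)`-squid structure on a hypergraph `H`: `d` spines, the `i`-th spine
having `r - x i` strong and `k + x i` weak vertices, with `k+1` in-spine edges each
containing all the strong vertices of the spine, together covering the spine's weak
vertices, no proper subfamily covering them; every edge containing a weak vertex is
one of its spine's edges, `H` is `r`-uniform and connected. -/
structure Squid {V : Type*} [Fintype V] [DecidableEq V] (H : FinHypergraph V)
    (d k r : ℕ) (x : Fin d → ℕ) where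
  strong : Fin d → Finset V
  weak : Fin d → Finset V
  spineEdges : Fin d → Finset (Finset V)
  x_pos : ∀ i, 1 ≤ x i
  x_le : ∀ i, x i ≤ r - 1
  strong_card : ∀ i, (strong i).card = r - x i
  weak_card : ∀ i, (weak i).card = k + x i
  strong_weak_disj : ∀ i, Disjoint (strong i) (weak i)
  spine_disj : ∀ i j, i ≠ j → Disjoint (strong i ∪ weak i) (strong j ∪ weak j)
  vertex_partition :
    (Finset.univ : Finset V) = Finset.univ.biUnion (fun i => strong i ∪ weak i)
  spineEdges_sub : ∀ i, spineEdges i ⊆ H.edges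
  spineEdges_card : ∀ i, (spineEdges i).card = k + 1
  spineEdges_strong : ∀ i, ∀ e ∈ spineEdges i, strong i ⊆ e ∧ e ⊆ strong i ∪ weak i
  spineEdges_cover : ∀ i, weak i ⊆ (spineEdges i).biUnion id
  no_proper_cover : ∀ i, ∀ F ⊂ spineEdges i, ¬ weak i ⊆ F.biUnion id
  weak_edge_in_spine : ∀ e ∈ H.edges, ∀ i, (∃ w ∈ weak i, w ∈ e) → e ∈ spineEdges i
  uniform : H.Uniform r
  connected : H.Connected

/-!
A weak vertex is adjacent only to vertices of its own spine. While all weak vertices of a spine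
are white, a strong vertex of that spine needs all `k + 1` spine edges to cover its white
neighbours, since no proper subfamily of them covers the weak vertices; so it cannot force.
Hence if `D` avoids a spine, the spine's weak vertices stay white forever, and every `k`-power
dominating set meets each of the `d` disjoint spines. Conversely, one strong vertex per spine
already dominates the whole hypergraph.
-/

namespace FinHypergraph

variable {V : Type*} (H : FinHypergraph V) (k : ℕ)

theorem pdn_le_card {D : Finset V} (hD : H.IsPDS k ↑D) : H.pdn k ≤ D.card :=
  Nat.sInf_le ⟨D, hD, le_rfl⟩

theorem le_pdn {n : ℕ} (hex : ∃ D : Finset V, H.IsPDS k ↑D)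
    (hle : ∀ D : Finset V, H.IsPDS k ↑D → n ≤ D.card) : n ≤ H.pdn k := by
  obtain ⟨D, hD⟩ := hex
  refine le_csInf ⟨D.card, D, hD, le_rfl⟩ ?_
  rintro t ⟨D', hD', hD't⟩
  exact (hle D' hD').trans hD't

theorem exists_covers_card_le_wdeg (v : V) (S : Set V) :
    ∃ F, H.Covers v S F ∧ F.card ≤ H.wdeg v S := by
  classical
  refine Nat.sInf_mem (s := {t | ∃ F, H.Covers v S F ∧ F.card ≤ t}) ⟨_, {e ∈ H.edges | v ∈ e},
    ⟨Finset.filter_subset _ _, fun e he => (Finset.mem_filter.mp he).2, ?_⟩, le_rfl⟩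
  rintro u ⟨-, e, he, hve, hue⟩ -
  exact ⟨e, Finset.mem_filter.mpr ⟨he, hve⟩, hue⟩

variable {H k}

theorem Dominating.isPDS {D : Set V} (hD : H.Dominating D) : H.IsPDS k D :=
  ⟨0, hD⟩

theorem iterate_step_disjoint {W S : Set V}
    (hW : ∀ S, Disjoint S W → Disjoint (H.step k S) W) (hS : Disjoint S W) (t : ℕ) :
    Disjoint ((H.step k)^[t] S) W := by
  induction t with
  | zero => exact hS
  | succ t ih => rw [Function.iterate_succ_apply']; exact hW _ ih

theorem IsPDS.not_disjoint_closedNbhd {D W : Set V} (hD : H.IsPDS k D) (hWne : W.Nonempty)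
    (hW : ∀ S, Disjoint S W → Disjoint (H.step k S) W) :
    ¬ Disjoint (H.closedNbhd D) W := by
  intro hdisj
  obtain ⟨t, ht⟩ := hD
  have := iterate_step_disjoint hW hdisj t
  rw [ht, Set.univ_disjoint] at this
  exact hWne.ne_empty this

end FinHypergraph

namespace Squid

variable {V : Type*} [Fintype V] [DecidableEq V] {H : FinHypergraph V} {d k r : ℕ}
  {x : Fin d → ℕ}

section

variable (sq : Squid H d k r x)

theorem strong_nonempty (i : Fin d) : (sq.strong i).Nonempty := by
  rw [← Finset.card_pos, sq.strong_card]
  have := sq.x_pos i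
  have := sq.x_le i
  omega

theorem weak_nonempty (i : Fin d) : (sq.weak i).Nonempty := by
  rw [← Finset.card_pos, sq.weak_card]
  have := sq.x_pos i
  omega

theorem exists_mem_spine (u : V) : ∃ i, u ∈ sq.strong i ∪ sq.weak i := by
  have hu := Finset.mem_univ u
  rw [sq.vertex_partition] at hu
  obtain ⟨i, -, hi⟩ := Finset.mem_biUnion.mp hu
  exact ⟨i, hi⟩

theorem exists_spineEdge_mem {i : Fin d} {u : V} (hu : u ∈ sq.strong i ∪ sq.weak i) :
    ∃ e ∈ sq.spineEdges i, u ∈ e := by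
  rcases Finset.mem_union.mp hu with hu | hu
  · obtain ⟨e, he⟩ : (sq.spineEdges i).Nonempty := by
      rw [← Finset.card_pos, sq.spineEdges_card]
      omega
    exact ⟨e, he, (sq.spineEdges_strong i e he).1 hu⟩
  · simpa using sq.spineEdges_cover i hu

theorem adj_of_mem_strong {i : Fin d} {s u : V} (hs : s ∈ sq.strong i)
    (hu : u ∈ sq.strong i ∪ sq.weak i) (hne : s ≠ u) : H.Adj s u := by
  obtain ⟨e, he, hue⟩ := sq.exists_spineEdge_mem hu
  exact ⟨hne, e, sq.spineEdges_sub i he, (sq.spineEdges_strong i e he).1 hs, hue⟩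

theorem mem_spine_of_adj_weak {i : Fin d} {v w : V} (hw : w ∈ sq.weak i) (hvw : H.Adj v w) :
    v ∈ sq.strong i ∪ sq.weak i := by
  obtain ⟨-, e, he, hve, hwe⟩ := hvw
  exact (sq.spineEdges_strong i e (sq.weak_edge_in_spine e he i ⟨w, hw, hwe⟩)).2 hve

theorem dominating_of_strong {D : Set V} (hD : ∀ i, ∃ s ∈ D, s ∈ sq.strong i) :
    H.Dominating D := by
  refine Set.eq_univ_of_forall fun u => ?_
  obtain ⟨i, hu⟩ := sq.exists_mem_spine u
  obtain ⟨s, hsD, hs⟩ := hD i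
  by_cases hsu : s = u
  · exact Or.inl (hsu ▸ hsD)
  · exact Or.inr ⟨s, hsD, sq.adj_of_mem_strong hs hu hsu⟩

theorem spineEdges_subset_of_weak_subset {i : Fin d} {F : Finset (Finset V)}
    (hF : F ⊆ H.edges) (hcover : sq.weak i ⊆ F.biUnion id) : sq.spineEdges i ⊆ F := by
  have hcover' : sq.weak i ⊆ (F ∩ sq.spineEdges i).biUnion id := by
    intro w hw
    obtain ⟨e, heF, hwe⟩ := Finset.mem_biUnion.mp (hcover hw)
    exact Finset.mem_biUnion.mpr
      ⟨e, Finset.mem_inter.mpr ⟨heF, sq.weak_edge_in_spine e (hF heF) i ⟨w, hw, hwe⟩⟩, hwe⟩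
  have heq : F ∩ sq.spineEdges i = sq.spineEdges i :=
    Finset.inter_subset_right.eq_or_ssubset.resolve_right
      fun hss => sq.no_proper_cover i _ hss hcover'
  exact heq ▸ Finset.inter_subset_left

theorem lt_wdeg_of_mem_strong {i : Fin d} {v : V} (hv : v ∈ sq.strong i) {S : Set V}
    (hS : Disjoint S ↑(sq.weak i)) : k < H.wdeg v S := by
  obtain ⟨F, ⟨hFE, -, hFcov⟩, hFcard⟩ := H.exists_covers_card_le_wdeg v S
  have hcover : sq.weak i ⊆ F.biUnion id := by
    intro w hw
    have hvw : v ≠ w := fun h => Finset.disjoint_left.mp (sq.strong_weak_disj i) hv (h ▸ hw)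
    obtain ⟨e, heF, hwe⟩ := hFcov w (sq.adj_of_mem_strong hv (Finset.mem_union_right _ hw) hvw)
      (Set.disjoint_right.mp hS hw)
    exact Finset.mem_biUnion.mpr ⟨e, heF, hwe⟩
  calc k < (sq.spineEdges i).card := by rw [sq.spineEdges_card]; omega
    _ ≤ F.card := Finset.card_le_card (sq.spineEdges_subset_of_weak_subset hFE hcover)
    _ ≤ H.wdeg v S := hFcard

theorem step_disjoint_weak (i : Fin d) {S : Set V} (hS : Disjoint S ↑(sq.weak i)) :
    Disjoint (H.step k S) ↑(sq.weak i) := by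
  rw [Set.disjoint_right]
  rintro w hw (hwS | ⟨v, hvS, hvw, hdeg⟩)
  · exact Set.disjoint_right.mp hS hw hwS
  · have hv_weak : v ∉ sq.weak i := fun h => Set.disjoint_left.mp hS hvS h
    have hv : v ∈ sq.strong i := by
      simpa [hv_weak] using sq.mem_spine_of_adj_weak hw hvw
    exact (sq.lt_wdeg_of_mem_strong hv hS).not_ge hdeg

theorem exists_mem_spine_of_isPDS {D : Set V} (hD : H.IsPDS k D) (i : Fin d) :
    ∃ u ∈ D, u ∈ sq.strong i ∪ sq.weak i := by
  obtain ⟨w, hwN, hw⟩ := Set.not_disjoint_iff.mp <| hD.not_disjoint_closedNbhd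
    (Finset.coe_nonempty.mpr (sq.weak_nonempty i)) fun _ => sq.step_disjoint_weak i
  rcases hwN with hwD | ⟨v, hvD, hvw⟩
  · exact ⟨w, hwD, Finset.mem_union_right _ hw⟩
  · exact ⟨v, hvD, sq.mem_spine_of_adj_weak hw hvw⟩

end

theorem le_card_of_isPDS (sq : Squid H d k r x) {D : Finset V} (hD : H.IsPDS k ↑D) :
    d ≤ D.card := by
  choose g hgD hg using sq.exists_mem_spine_of_isPDS hD
  have hinj : Set.InjOn g ↑(Finset.univ : Finset (Fin d)) := by
    intro i _ j _ hij
    by_contra hne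
    exact Finset.disjoint_left.mp (sq.spine_disj i j hne) (hg i) (hij ▸ hg j)
  simpa using Finset.card_le_card_of_injOn g (fun i _ => hgD i) hinj

theorem exists_isPDS_card_le (sq : Squid H d k r x) :
    ∃ D : Finset V, H.IsPDS k ↑D ∧ D.card ≤ d := by
  choose s hs using sq.strong_nonempty
  refine ⟨Finset.univ.image s, (sq.dominating_of_strong fun i => ⟨s i, ?_, hs i⟩).isPDS, ?_⟩
  · simp
  · simpa using Finset.card_image_le (s := Finset.univ) (f := s)

end Squid

open FinHypergraph in
theorem squid_pdn_eq_general {V : Type*} [Fintype V] [DecidableEq V] (H : FinHypergraph V)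
    (d k r : ℕ) (x : Fin d → ℕ)
    (sq : Squid H d k r x) :
    H.pdn k = d := by
  obtain ⟨D, hD, hDcard⟩ := sq.exists_isPDS_card_le
  exact le_antisymm ((H.pdn_le_card k hD).trans hDcard)
    (H.le_pdn k ⟨D, hD⟩ fun _ => sq.le_card_of_isPDS)

open FinHypergraph in
/-- If `H` is a `(d,k,r,x)`-squid with `d(r+k) = |V(H)|`, then
`γ_p^k(H) = d`. -/
theorem squid_pdn_eq {V : Type*} [Fintype V] [DecidableEq V] (H : FinHypergraph V)
    (d k r : ℕ) (x : Fin d → ℕ) (hd : 1 ≤ d) (hk : 1 ≤ k) (hr : 2 ≤ r)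
    (sq : Squid H d k r x) (hcard : d * (r + k) = Fintype.card V) :
    H.pdn k = d :=
  squid_pdn_eq_general H d k r x sq
end
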